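/- Let l ≥ 4 and let A(D_l) be the Artin group of the Coxeter graph D_l. Then in A(D_l): Δ(x_2,…,x_l)⁻¹ x_2⁻¹ x_1 Δ(x_2,…,x_l) · Δ(x_2,…,x_{l−1})⁻¹ x_2⁻¹ x_1 Δ(x_2,…,x_{l−1}) = x_{l−1} · Δ(x_2,…,x_l)⁻¹ x_2⁻¹ x_1 Δ(x_2,…,x_l) · x_{l−1}⁻¹. -/

import Mathlib

/-!
Write `Δ = Δ(x₂,…,x_l)` and `Δ' = Δ(x₂,…,x_{l-1})`. Peeling off the first factor gives
`Δ = x₂ c Δ'` with `c = x₃x₄⋯x_l`, and, as for any family satisfying the braid relations of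
type `A`, the fundamental element `Δ'` conjugates its last generator to its first:
`Δ' x_{l-1} = x₂ Δ'`. Conjugating by `Δ'` turns the identity into a word identity in
`x₁, x₂, x₃, c`, which follows from `x₁x₂ = x₂x₁` together with `x₁cx₁ = x₃x₁c` and
`x₂cx₂ = x₃x₂c`; the last two are the braid relations of `x₃` with `x₁` and `x₂`, because
`x₁` and `x₂` commute with `x₄⋯x_l`.
-/

namespace ArtinTypeD

/-- `altWord a b m` is the alternating word `prod(a,b,m) = abab⋯` of length `m`. -/
def altWord {α : Type*} (a b : α) : ℕ → FreeGroup α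
  | 0 => 1
  | k + 1 => FreeGroup.of a * altWord b a k

/-- The Coxeter matrix of the graph `D_l`; the `0`-based vertex `i : Fin l`
corresponds to the vertex `x_{i+1}` of `D_l`, so the edges (label `3`) are
`{x_1,x_3}`, `{x_2,x_3}` and `{x_i,x_{i+1}}` for `3 ≤ i ≤ l-1`; every other
pair of distinct vertices has label `2`. -/
def coxD (l : ℕ) (i j : Fin l) : ℕ :=
  if i = j then 1
  else if ((i : ℕ) = 0 ∧ (j : ℕ) = 2) ∨ ((j : ℕ) = 0 ∧ (i : ℕ) = 2) ∨
      (1 ≤ (i : ℕ) ∧ (i : ℕ) + 1 = (j : ℕ)) ∨ (1 ≤ (j : ℕ) ∧ (j : ℕ) + 1 = (i : ℕ)) then 3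
  else 2

/-- The Artin relators of `D_l`. -/
def relsD (l : ℕ) : Set (FreeGroup (Fin l)) :=
  {w | ∃ i j : Fin l, i ≠ j ∧ w = altWord i j (coxD l i j) * (altWord j i (coxD l i j))⁻¹}

/-- The Artin group `A(D_l)`. -/
abbrev AD (l : ℕ) := PresentedGroup (relsD l)

/-- The generator `x_i` of `A(D_l)` (`1`-indexed, junk value `1` out of range). -/
def x (l i : ℕ) : AD l :=
  if h : 1 ≤ i ∧ i ≤ l then PresentedGroup.of (⟨i - 1, by omega⟩ : Fin l) else 1

/-- `Δ(z_1,…,z_m) = (z_1⋯z_m)(z_1⋯z_{m-1})⋯(z_1z_2)z_1`. -/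
def deltaList {G : Type*} [Group G] (zs : List G) : G :=
  (((List.range zs.length).reverse).map fun k => (zs.take (k + 1)).prod).prod

/-- `Δ(x_a, x_{a+1}, …, x_b)` in `A(D_l)`. -/
def delta (l a b : ℕ) : AD l :=
  deltaList ((List.range (b + 1 - a)).map fun k => x l (a + k))

end ArtinTypeD

namespace ArtinTypeD

section BraidFamily

variable {G : Type*} [Group G]

structure IsBraidFamily (s : ℕ → G) (n : ℕ) : Prop where
  braid : ∀ i, i + 1 < n → s i * s (i + 1) * s i = s (i + 1) * s i * s (i + 1)
  commute : ∀ i j, i + 2 ≤ j → j < n → Commute (s i) (s j)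

theorem IsBraidFamily.mono {s : ℕ → G} {m n : ℕ} (h : IsBraidFamily s n) (hmn : m ≤ n) :
    IsBraidFamily s m :=
  ⟨fun i hi => h.braid i (by omega), fun i j hij hj => h.commute i j hij (by omega)⟩

theorem deltaList_append_singleton (L : List G) (z : G) :
    deltaList (L ++ [z]) = (L ++ [z]).prod * deltaList L := by
  unfold deltaList
  rw [List.length_append, List.length_singleton, List.range_succ, List.reverse_append,
    List.reverse_singleton, List.singleton_append, List.map_cons, List.prod_cons,
    List.take_of_length_le (by simp)]
  congr 2
  refine List.map_congr_left fun k hk => ?_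
  rw [List.mem_reverse, List.mem_range] at hk
  rw [List.take_append_of_le_length (by omega)]

theorem deltaList_range_succ (s : ℕ → G) (n : ℕ) :
    deltaList ((List.range (n + 1)).map s) =
      ((List.range (n + 1)).map s).prod * deltaList ((List.range n).map s) := by
  rw [List.range_succ, List.map_append, List.map_singleton, deltaList_append_singleton]

theorem reverse_prod_range_succ (s : ℕ → G) (n : ℕ) :
    ((List.range (n + 1)).map s).reverse.prod = s n * ((List.range n).map s).reverse.prod := by
  simp [List.range_succ]

theorem Commute.deltaList_right {a : G} {L : List G} (h : ∀ b ∈ L, Commute a b) :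
    Commute a (deltaList L) := by
  refine Commute.list_prod_right _ _ fun y hy => ?_
  obtain ⟨k, -, rfl⟩ := List.mem_map.1 hy
  exact Commute.list_prod_right _ _ fun b hb => h b (List.mem_of_mem_take hb)

namespace IsBraidFamily

variable {s : ℕ → G} {n : ℕ}

theorem commute_of_mem_range (h : IsBraidFamily s n) {m j : ℕ} (hmj : m < j) (hj : j < n) :
    ∀ b ∈ (List.range m).map s, Commute (s j) b := by
  simp only [List.mem_map, List.mem_range, forall_exists_index, and_imp]
  rintro _ i hi rfl
  exact (h.commute i j (by omega) hj).symm

theorem reverse_prod_mul (h : IsBraidFamily s n) {i : ℕ} (hi : i + 1 < n) :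
    ((List.range n).map s).reverse.prod * s (i + 1) =
      s i * ((List.range n).map s).reverse.prod := by
  induction n with
  | zero => omega
  | succ m ih =>
    rw [reverse_prod_range_succ]
    rcases Nat.lt_or_ge (i + 1) m with him | him
    · rw [mul_assoc, ih (h.mono m.le_succ) him, ← mul_assoc,
        ← (h.commute i m (by omega) (by omega)).eq, mul_assoc]
    · obtain rfl : m = i + 1 := by omega
      have hcomm : Commute (s (i + 1)) ((List.range i).map s).reverse.prod :=
        Commute.list_prod_right _ _ fun b hb =>
          h.commute_of_mem_range (Nat.lt_succ_self i) (by omega) b (List.mem_reverse.1 hb)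
      rw [reverse_prod_range_succ]
      simp only [mul_assoc]
      rw [← hcomm.eq]
      simp only [← mul_assoc]
      rw [← h.braid i (by omega)]

theorem deltaList_range_succ_eq_mul_reverse_prod (h : IsBraidFamily s (n + 1)) :
    deltaList ((List.range (n + 1)).map s) =
      deltaList ((List.range n).map s) * ((List.range (n + 1)).map s).reverse.prod := by
  induction n with
  | zero => simp [deltaList]
  | succ m ih =>
    have hcomm : Commute (s (m + 1)) (deltaList ((List.range m).map s)) :=
      Commute.deltaList_right (h.commute_of_mem_range (by omega) (by omega))
    calc deltaList ((List.range (m + 2)).map s)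
        = ((List.range (m + 1)).map s).prod * s (m + 1) *
            (deltaList ((List.range m).map s) * ((List.range (m + 1)).map s).reverse.prod) := by
          rw [deltaList_range_succ s (m + 1), ih (h.mono (by omega)), List.prod_range_succ]
      _ = ((List.range (m + 1)).map s).prod * deltaList ((List.range m).map s) *
            (s (m + 1) * ((List.range (m + 1)).map s).reverse.prod) := by
          simp only [mul_assoc]
          rw [← mul_assoc (s (m + 1)), hcomm.eq, mul_assoc]
      _ = deltaList ((List.range (m + 1)).map s) * ((List.range (m + 2)).map s).reverse.prod := by
          rw [deltaList_range_succ s m, reverse_prod_range_succ s (m + 1)]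

theorem deltaList_mul_last (h : IsBraidFamily s (n + 1)) :
    deltaList ((List.range (n + 1)).map s) * s n =
      s 0 * deltaList ((List.range (n + 1)).map s) := by
  induction n with
  | zero => simp [deltaList]
  | succ m ih =>
    rw [h.deltaList_range_succ_eq_mul_reverse_prod, mul_assoc, h.reverse_prod_mul (by omega),
      ← mul_assoc, ih (h.mono (by omega)), mul_assoc]

end IsBraidFamily

end BraidFamily

section TypeD

variable {l : ℕ}

theorem mk_altWord_eq {i j : Fin l} (hij : i ≠ j) :
    PresentedGroup.mk (relsD l) (altWord i j (coxD l i j)) =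
      PresentedGroup.mk (relsD l) (altWord j i (coxD l i j)) :=
  PresentedGroup.mk_eq_mk_of_mul_inv_mem ⟨i, j, hij, rfl⟩

theorem commute_of_coxD_eq_two {i j : Fin l} (hij : i ≠ j) (h : coxD l i j = 2) :
    Commute (PresentedGroup.of i : AD l) (PresentedGroup.of j) := by
  have := mk_altWord_eq hij
  simpa [h, altWord, PresentedGroup.of, Commute, SemiconjBy] using this

theorem braid_of_coxD_eq_three {i j : Fin l} (hij : i ≠ j) (h : coxD l i j = 3) :
    (PresentedGroup.of i : AD l) * PresentedGroup.of j * PresentedGroup.of i =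
      PresentedGroup.of j * PresentedGroup.of i * PresentedGroup.of j := by
  have := mk_altWord_eq hij
  simpa [h, altWord, PresentedGroup.of, mul_assoc] using this

theorem x_eq_of {i : ℕ} (h1 : 1 ≤ i) (h2 : i ≤ l) :
    x l i = PresentedGroup.of (⟨i - 1, by omega⟩ : Fin l) := dif_pos ⟨h1, h2⟩

theorem commute_x {i j : ℕ} (hi : 1 ≤ i) (hij : i + 2 ≤ j) (hj : j ≤ l)
    (h13 : ¬(i = 1 ∧ j = 3)) : Commute (x l i) (x l j) := by
  rw [x_eq_of hi (by omega), x_eq_of (by omega) hj]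
  refine commute_of_coxD_eq_two (by simp only [ne_eq, Fin.ext_iff]; omega) ?_
  rw [coxD, if_neg (by simp only [Fin.ext_iff]; omega), if_neg (by dsimp only; omega)]

theorem commute_x_one_x_two (hl : 2 ≤ l) : Commute (x l 1) (x l 2) := by
  rw [x_eq_of le_rfl (by omega), x_eq_of (by omega) hl]
  refine commute_of_coxD_eq_two (by simp [Fin.ext_iff]) ?_
  rw [coxD, if_neg (by simp [Fin.ext_iff]), if_neg (by dsimp only; omega)]

theorem braid_x {i j : ℕ} (hi : 1 ≤ i) (hij : i < j) (hj : j ≤ l)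
    (hedge : (i = 1 ∧ j = 3) ∨ (2 ≤ i ∧ j = i + 1)) :
    x l i * x l j * x l i = x l j * x l i * x l j := by
  rw [x_eq_of hi (by omega), x_eq_of (by omega) hj]
  refine braid_of_coxD_eq_three (by simp only [ne_eq, Fin.ext_iff]; omega) ?_
  rw [coxD, if_neg (by simp only [Fin.ext_iff]; omega), if_pos (by dsimp only; omega)]

theorem isBraidFamily_x (l : ℕ) : IsBraidFamily (fun i => x l (2 + i)) (l - 1) where
  braid i hi := braid_x (by omega) (by omega) (by omega) (by omega)
  commute i j hij hj := commute_x (by omega) (by omega) (by omega) (by omega)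

end TypeD

section Conjugation

variable {G : Type*} [Group G]

theorem braid_mul_of_commute {a b e : G} (hab : a * b * a = b * a * b) (hae : Commute a e) :
    a * (b * e) * a = b * a * (b * e) := by
  rw [mul_assoc, mul_assoc, ← hae.eq, ← mul_assoc, ← mul_assoc, hab]
  simp only [mul_assoc]

theorem conj_identity_of_braid_relations {x₁ x₂ x₃ c d a : G} (h₁₂ : Commute x₁ x₂)
    (h₁ : x₁ * c * x₁ = x₃ * x₁ * c) (h₂ : x₂ * c * x₂ = x₃ * x₂ * c) (hd : d * a = x₂ * d) :
    (x₂ * c * d)⁻¹ * x₂⁻¹ * x₁ * (x₂ * c * d) * (d⁻¹ * x₂⁻¹ * x₁ * d) =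
      a * ((x₂ * c * d)⁻¹ * x₂⁻¹ * x₁ * (x₂ * c * d)) * a⁻¹ := by
  have ha : a = d⁻¹ * x₂ * d := by rw [mul_assoc, ← hd, inv_mul_cancel_left]
  have hx : x₂⁻¹ * x₁ = x₁ * x₂⁻¹ := h₁₂.inv_right.eq.symm
  have hc : (x₂ * c)⁻¹ * x₃ * (x₂ * c) = x₂ := by
    rw [mul_assoc, ← mul_assoc x₃, ← h₂]; group
  have key : (x₂ * c)⁻¹ * (x₂⁻¹ * x₁) * (x₂ * c) * (x₂⁻¹ * x₁) =
      x₂ * ((x₂ * c)⁻¹ * (x₂⁻¹ * x₁) * (x₂ * c)) * x₂⁻¹ := by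
    calc _ = (x₂ * c)⁻¹ * (x₁ * c * x₁) * x₂⁻¹ := by rw [hx]; group
      _ = (x₂ * c)⁻¹ * x₃ * (x₂ * c) * (x₂ * c)⁻¹ * (x₁ * c) * x₂⁻¹ := by rw [h₁]; group
      _ = _ := by rw [hc, hx]; group
  calc _ = d⁻¹ * ((x₂ * c)⁻¹ * (x₂⁻¹ * x₁) * (x₂ * c) * (x₂⁻¹ * x₁)) * d := by group
    _ = _ := by rw [key, ha]; group

end Conjugation

end ArtinTypeD

open ArtinTypeD in
/-- The second equality of **Lemma 3.5** of Labruère–Paris: in `A(D_l)` (`l ≥ 4`),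
`Δ(x_2,…,x_l)⁻¹ x_2⁻¹ x_1 Δ(x_2,…,x_l) · Δ(x_2,…,x_{l−1})⁻¹ x_2⁻¹ x_1 Δ(x_2,…,x_{l−1})
  = x_{l−1} · Δ(x_2,…,x_l)⁻¹ x_2⁻¹ x_1 Δ(x_2,…,x_l) · x_{l−1}⁻¹`. -/
theorem lemma_3_5_second (l : ℕ) (hl : 4 ≤ l) :
    (delta l 2 l)⁻¹ * (x l 2)⁻¹ * x l 1 * delta l 2 l *
      ((delta l 2 (l - 1))⁻¹ * (x l 2)⁻¹ * x l 1 * delta l 2 (l - 1)) =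
    x l (l - 1) * ((delta l 2 l)⁻¹ * (x l 2)⁻¹ * x l 1 * delta l 2 l) * (x l (l - 1))⁻¹ := by
  obtain ⟨k, rfl⟩ : ∃ k, l = k + 4 := ⟨l - 4, by omega⟩
  set s : ℕ → AD (k + 4) := fun i => x (k + 4) (2 + i)
  set Δ' := deltaList ((List.range (k + 2)).map s)
  set e := ((List.range (k + 1)).map fun i => s (i + 2)).prod
  have he : ∀ i, 1 ≤ i → i ≤ 2 → Commute (x (k + 4) i) e := fun i hi₁ hi₂ =>
    Commute.list_prod_right _ _ <| by
      simp only [List.mem_map, List.mem_range, forall_exists_index, and_imp]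
      rintro _ j hj rfl
      exact commute_x hi₁ (by omega) (by omega) (by omega)
  have hΔ : delta (k + 4) 2 (k + 4) = x (k + 4) 2 * (x (k + 4) 3 * e) * Δ' := by
    rw [delta, show k + 4 + 1 - 2 = k + 2 + 1 by omega, deltaList_range_succ,
      List.prod_range_succ', List.prod_range_succ']
  have hΔ' : delta (k + 4) 2 (k + 4 - 1) = Δ' := by
    rw [delta, show k + 4 - 1 + 1 - 2 = k + 2 by omega]
  have hlast : Δ' * x (k + 4) (k + 4 - 1) = x (k + 4) 2 * Δ' := by
    rw [show k + 4 - 1 = 2 + (k + 1) by omega]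
    exact ((isBraidFamily_x (k + 4)).mono (m := k + 2) (by omega)).deltaList_mul_last
  rw [hΔ, hΔ']
  exact conj_identity_of_braid_relations (commute_x_one_x_two (by omega))
    (braid_mul_of_commute (braid_x le_rfl (by omega) (by omega) (by omega))
      (he 1 le_rfl (by omega)))
    (braid_mul_of_commute (braid_x (by omega) (by omega) (by omega) (by omega))
      (he 2 (by omega) le_rfl))
    hlast
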